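/- arXiv:1902.02285 — 2 statements merged into one kernel-verified Lean document; each statement's English description precedes it below -/
import Mathlib

section
/- Let A be an n×n complex matrix, θ ∈ ℂ, and u ∈ ℂⁿ a unit vector. Suppose t ∈ ℂⁿ satisfies the normal equation (I−uu*)(A−θI)*(A−θI)(I−uu*)t = −(I−uu*)(A−θI)*(A−θI)u, write v = (I−uu*)t, and let u' = (u+v)/‖u+v‖ be the normalized new eigenvector approximation. Then ‖u+v‖² = 1 + ‖v‖² and ‖(A−θI)u'‖² = (‖(A−θI)u‖² − ‖(A−θI)v‖²)/(1 + ‖v‖²); in particular ‖(A−θI)u‖² − ‖(A−θI)u'‖² = (‖(A−θI)u‖²·‖v‖² + ‖(A−θI)v‖²)/(1 + ‖v‖²). -/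
open scoped ComplexInnerProductSpace Matrix

/-- The action of a matrix on a vector of `EuclideanSpace ℂ (Fin n)`. -/
noncomputable def mApp {n : ℕ} (A : Matrix (Fin n) (Fin n) ℂ)
    (v : EuclideanSpace ℂ (Fin n)) : EuclideanSpace ℂ (Fin n) :=
  Matrix.toEuclideanLin A v

/-- The orthogonal projection `(I - uu*) t = t - ⟪u, t⟫ u` onto the orthogonal
complement of the unit vector `u`. -/
noncomputable def proj {n : ℕ} (u t : EuclideanSpace ℂ (Fin n)) :
    EuclideanSpace ℂ (Fin n) :=
  t - ⟪u, t⟫ • u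

/-! Write `T = A - θ I`. The normal equation says that `(T† T)(u + v)` is a multiple of `u`;
since `v ⊥ u`, this makes `T (u + v)` orthogonal to `T v`, and Pythagoras applied to
`T u = T (u + v) - T v` gives `‖T (u + v)‖² = ‖T u‖² - ‖T v‖²`. Normalizing `u + v`, whose squared
norm is `1 + ‖v‖²` by Pythagoras again, yields the formulas. -/

section

variable {𝕜 E F : Type*} [RCLike 𝕜] [NormedAddCommGroup E] [InnerProductSpace 𝕜 E]
  [NormedAddCommGroup F] [InnerProductSpace 𝕜 F] [FiniteDimensional 𝕜 E] [FiniteDimensional 𝕜 F]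

local notation "⟪" x ", " y "⟫" => inner 𝕜 x y

theorem LinearMap.norm_map_sq_eq_norm_map_add_sq_add_norm_map_sq (T : E →ₗ[𝕜] F) {u v : E}
    (c : 𝕜) (huv : ⟪u, v⟫ = 0) (hT : T.adjoint (T (u + v)) = c • u) :
    ‖T u‖ ^ 2 = ‖T (u + v)‖ ^ 2 + ‖T v‖ ^ 2 := by
  have horth : ⟪T (u + v), -T v⟫ = 0 := by
    rw [inner_neg_right, ← LinearMap.adjoint_inner_left, hT, inner_smul_left, huv, mul_zero,
      neg_zero]
  calc ‖T u‖ ^ 2 = ‖T (u + v) + -T v‖ ^ 2 := by rw [map_add, add_neg_cancel_right]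
    _ = ‖T (u + v)‖ ^ 2 + ‖T v‖ ^ 2 := by
      rw [sq, sq, sq, norm_add_sq_eq_norm_sq_add_norm_sq_of_inner_eq_zero _ _ horth, norm_neg]

end

section

variable {n : ℕ}

theorem inner_proj_right {u : EuclideanSpace ℂ (Fin n)} (hu : ‖u‖ = 1)
    (t : EuclideanSpace ℂ (Fin n)) : ⟪u, proj u t⟫ = 0 := by
  rw [proj, inner_sub_right, inner_smul_right, inner_self_eq_norm_sq_to_K, hu]
  simp

theorem proj_add (u x y : EuclideanSpace ℂ (Fin n)) :
    proj u (x + y) = proj u x + proj u y := by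
  simp only [proj, inner_add_right, add_smul]
  abel

theorem proj_eq_zero_iff {u x : EuclideanSpace ℂ (Fin n)} : proj u x = 0 ↔ x = ⟪u, x⟫ • u :=
  sub_eq_zero

theorem mApp_add (A : Matrix (Fin n) (Fin n) ℂ) (x y : EuclideanSpace ℂ (Fin n)) :
    mApp A (x + y) = mApp A x + mApp A y :=
  map_add _ x y

theorem mApp_conjTranspose_mul_self (B : Matrix (Fin n) (Fin n) ℂ)
    (x : EuclideanSpace ℂ (Fin n)) :
    mApp (Bᴴ * B) x = (Matrix.toEuclideanLin B).adjoint (mApp B x) := by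
  rw [mApp, mApp, ← Matrix.toEuclideanLin_conjTranspose_eq_adjoint, Matrix.toLpLin_mul_same]
  rfl

theorem norm_mApp_inv_norm_smul_sq (B : Matrix (Fin n) (Fin n) ℂ)
    (x : EuclideanSpace ℂ (Fin n)) :
    ‖mApp B (‖x‖⁻¹ • x)‖ ^ 2 = ‖mApp B x‖ ^ 2 / ‖x‖ ^ 2 := by
  rw [mApp, LinearMap.map_smul_of_tower, norm_smul, norm_inv, norm_norm, mul_pow, inv_pow,
    inv_mul_eq_div, mApp]

end

theorem stmt10 {n : ℕ} (A : Matrix (Fin n) (Fin n) ℂ) (θ : ℂ)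
    (u : EuclideanSpace ℂ (Fin n)) (hu : ‖u‖ = 1) (t : EuclideanSpace ℂ (Fin n))
    (hnormal : proj u (mApp ((A - θ • 1)ᴴ * (A - θ • 1)) (proj u t)) =
      -proj u (mApp ((A - θ • 1)ᴴ * (A - θ • 1)) u))
    (v : EuclideanSpace ℂ (Fin n)) (hv : v = proj u t)
    (u' : EuclideanSpace ℂ (Fin n)) (hu' : u' = ‖u + v‖⁻¹ • (u + v)) :
    ‖u + v‖ ^ 2 = 1 + ‖v‖ ^ 2 ∧
    ‖mApp (A - θ • 1) u'‖ ^ 2 =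
      (‖mApp (A - θ • 1) u‖ ^ 2 - ‖mApp (A - θ • 1) v‖ ^ 2) / (1 + ‖v‖ ^ 2) ∧
    ‖mApp (A - θ • 1) u‖ ^ 2 - ‖mApp (A - θ • 1) u'‖ ^ 2 =
      (‖mApp (A - θ • 1) u‖ ^ 2 * ‖v‖ ^ 2 + ‖mApp (A - θ • 1) v‖ ^ 2) /
        (1 + ‖v‖ ^ 2) := by
  set B := A - θ • 1
  have huv : ⟪u, v⟫ = 0 := hv ▸ inner_proj_right hu t
  have hsum : ‖u + v‖ ^ 2 = 1 + ‖v‖ ^ 2 := by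
    rw [sq, sq, norm_add_sq_eq_norm_sq_add_norm_sq_of_inner_eq_zero u v huv, hu, one_mul]
  have hM : proj u (mApp (Bᴴ * B) (u + v)) = 0 := by
    rw [mApp_add, proj_add, hv, hnormal, add_neg_cancel]
  have hpyth : ‖mApp B u‖ ^ 2 = ‖mApp B (u + v)‖ ^ 2 + ‖mApp B v‖ ^ 2 :=
    (Matrix.toEuclideanLin B).norm_map_sq_eq_norm_map_add_sq_add_norm_map_sq _ huv
      ((mApp_conjTranspose_mul_self B (u + v)).symm.trans (proj_eq_zero_iff.mp hM))
  have hu'sq : ‖mApp B u'‖ ^ 2 = (‖mApp B u‖ ^ 2 - ‖mApp B v‖ ^ 2) / (1 + ‖v‖ ^ 2) := by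
    rw [hu', norm_mApp_inv_norm_smul_sq, hsum, hpyth, add_sub_cancel_right]
  refine ⟨hsum, hu'sq, ?_⟩
  have hpos : (0 : ℝ) < 1 + ‖v‖ ^ 2 := by positivity
  rw [hu'sq]
  field_simp
  ring
end

section
/- Let A be an n×n Hermitian complex matrix. Let (u_k) be a sequence of unit vectors in ℂⁿ with real Rayleigh quotients ρ_k = ⟨u_k, A u_k⟩, and (v_k) a sequence of vectors such that for every k: (i) ⟨u_k, v_k⟩ = 0; (ii) ‖(A−ρ_k I)(u_k + v_k)‖ ≤ ‖(A−ρ_k I)(u_k + w)‖ for every w with ⟨u_k, w⟩ = 0; (iii) u_{k+1} = (u_k + v_k)/‖u_k + v_k‖; and (iv) whenever v_k ≠ 0, there exists a scalar τ_k such that u_k + τ_k·v_k minimizes ‖(A−ρ_k I)z‖²/‖z‖² over all nonzero z in the span of {u_k, v_k}. Then ‖(A−ρ_k I)u_k‖²·‖v_k‖² → 0 as k → ∞. -/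
/-!
Write `M = A - ρ_k` and `p = u_k + v_k`. Minimality of the residual over `u_kᗮ` forces
`M (M p) = ‖M p‖² u_k`, and `ρ_{k+1}` is the Rayleigh quotient of `p`, so the residuals
`a_k = ‖M u_k‖²` satisfy `a_{k+1} (1 + ‖v_k‖²) ≤ ‖M p‖² ≤ a_k`. Hence `a_k` decreases to a limit
`L`. If `L > 0`, then `‖v_k‖² ≤ (a_k - a_{k+1}) / L → 0`. If `L = 0`, expand in an eigenbasis of
`A`, where `p = ‖M p‖² M⁻² u_k` and `⟪u_k, p⟫ = 1`. Once `a_k` is small against the gap `γ`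
between distinct eigenvalues, `u_k` has all but a fraction `4 a_k / γ²` of its weight on the
eigenvalue nearest to `ρ_k`, and a variance estimate gives `‖v_k‖² = ‖p‖² - 1 ≤ 12 a_k / γ²`,
so `a_k ‖v_k‖² = O(a_k²)`.
-/

open scoped ComplexInnerProductSpace Matrix

open Filter Topology Finset

section

open scoped ComplexConjugate InnerProductSpace

theorem exists_pos_le_abs_sub_of_ne {ι : Type*} [Fintype ι] (f : ι → ℝ) :
    ∃ γ > 0, ∀ i j, f i ≠ f j → γ ≤ |f i - f j| := by
  classical
  set D : Finset ℝ := insert 1 ((univ.filter fun ij : ι × ι => f ij.1 ≠ f ij.2).image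
    fun ij => |f ij.1 - f ij.2|)
  refine ⟨D.min' (insert_nonempty _ _), ?_, fun i j hij => D.min'_le _ ?_⟩
  · simp only [gt_iff_lt, lt_min'_iff, D, mem_insert, mem_image, mem_filter, mem_univ, true_and]
    rintro t (rfl | ⟨ij, hij, rfl⟩)
    · exact one_pos
    · exact abs_pos.mpr (sub_ne_zero.mpr hij)
  · exact mem_insert_of_mem (mem_image.mpr ⟨(i, j), by simpa using hij, rfl⟩)

theorem sq_le_sq_of_le_abs_sub {s s₀ γ : ℝ} (hs₀ : s₀ ^ 2 ≤ γ ^ 2 / 8) (hγ : 0 ≤ γ)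
    (hgap : γ ≤ |s - s₀|) : γ ^ 2 / 4 ≤ s ^ 2 := by
  have h₀ : |s₀| ≤ γ / 2 := abs_le_of_sq_le_sq (by nlinarith) (by positivity)
  have h : γ / 2 ≤ |s| := by linarith [abs_sub s s₀]
  calc γ ^ 2 / 4 = (γ / 2) ^ 2 := by ring
    _ ≤ |s| ^ 2 := pow_le_pow_left₀ (by positivity) h 2
    _ = s ^ 2 := sq_abs s

theorem tendsto_mul_zero_of_succ_mul_one_add_le {a d : ℕ → ℝ} (ha : ∀ k, 0 ≤ a k)
    (hd : ∀ k, 0 ≤ d k) (hstep : ∀ k, a (k + 1) * (1 + d k) ≤ a k) {C δ : ℝ} (hδ : 0 < δ)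
    (hkey : ∀ k, 0 < a (k + 1) → a k ≤ δ → d k ≤ C * a k) :
    Tendsto (fun k => a k * d k) atTop (𝓝 0) := by
  have hanti : Antitone a :=
    antitone_nat_of_succ_le fun k => by nlinarith [hstep k, ha (k + 1), hd k]
  have hbdd : BddBelow (Set.range a) := ⟨0, Set.forall_mem_range.2 ha⟩
  obtain ⟨L, hlim, hLle⟩ : ∃ L, Tendsto a atTop (𝓝 L) ∧ ∀ k, L ≤ a k :=
    ⟨_, tendsto_atTop_ciInf hanti hbdd, ciInf_le hbdd⟩
  rcases (ge_of_tendsto' hlim ha).eq_or_lt with rfl | hL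
  · by_cases hz : ∃ k₀, a k₀ = 0
    · obtain ⟨k₀, hk₀⟩ := hz
      refine tendsto_const_nhds.congr' ?_
      filter_upwards [eventually_ge_atTop k₀] with k hk
      rw [le_antisymm (hk₀ ▸ hanti hk) (ha k), zero_mul]
    · push Not at hz
      have hsq : Tendsto (fun k => C * a k ^ 2) atTop (𝓝 0) := by
        simpa using (hlim.pow 2).const_mul C
      refine squeeze_zero' (Eventually.of_forall fun k => mul_nonneg (ha k) (hd k)) ?_ hsq
      filter_upwards [hlim.eventually (ge_mem_nhds hδ)] with k hk
      have := hkey k ((ha _).lt_of_ne' (hz _)) hk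
      nlinarith [ha k]
  · have hd0 : Tendsto d atTop (𝓝 0) := by
      have hgap : Tendsto (fun k => (a k - a (k + 1)) / L) atTop (𝓝 0) := by
        simpa using (hlim.sub (hlim.comp (tendsto_add_atTop_nat 1))).div_const L
      refine squeeze_zero hd (fun k => ?_) hgap
      rw [le_div_iff₀ hL]
      nlinarith [hstep k, hd k, hLle (k + 1)]
    simpa using hlim.mul hd0

theorem sum_sq_mul_le_one_add {ι : Type*} [Fintype ι] [DecidableEq ι] (S : Finset ι)
    {W b : ι → ℝ} {b₀ c : ℝ} (hW : ∀ i, 0 ≤ W i) (hb : ∀ i, 0 ≤ b i)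
    (hbW : ∑ i, b i * W i = 1) (hS : ∀ i ∈ S, b i = b₀) (hmass : 1 - c ≤ ∑ i ∈ S, W i)
    (hc₀ : 0 ≤ c) (hc : c ≤ 1 / 2) (hbc : ∀ i ∉ S, b i ≤ c) :
    ∑ i, b i ^ 2 * W i ≤ 1 + 3 * c := by
  set β := ∑ i ∈ S, W i
  set r := ∑ i ∈ Sᶜ, b i * W i
  have hβ : 0 < β := by linarith
  have hr₀ : 0 ≤ r := sum_nonneg fun i _ => mul_nonneg (hb i) (hW i)
  have hin : b₀ * β = 1 - r := by
    rw [← hbW, ← sum_add_sum_compl S, mul_sum, add_sub_cancel_right]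
    exact sum_congr rfl fun i hi => by rw [hS i hi]
  have hb₀ : 0 ≤ b₀ := by
    obtain ⟨i, hi⟩ : S.Nonempty := nonempty_of_sum_ne_zero hβ.ne'
    exact hS i hi ▸ hb i
  have hr₁ : r ≤ 1 := by nlinarith
  have hout : ∑ i ∈ Sᶜ, b i ^ 2 * W i ≤ c * r := by
    rw [mul_sum]
    refine sum_le_sum fun i hi => ?_
    have := hbc i (mem_compl.mp hi)
    have := mul_nonneg (hb i) (hW i)
    nlinarith
  have hin2 : ∑ i ∈ S, b i ^ 2 * W i = b₀ ^ 2 * β := by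
    rw [mul_sum]; exact sum_congr rfl fun i hi => by rw [hS i hi]
  -- `(b₀ β)² ≤ 1` while `β (1 + 2c) ≥ (1 - c)(1 + 2c) ≥ 1`
  have hS_le : b₀ ^ 2 * β ≤ 1 + 2 * c := by
    refine le_of_mul_le_mul_right ?_ hβ
    nlinarith
  rw [← sum_add_sum_compl S, hin2]
  nlinarith

theorem exists_cluster_of_sum_sq_mul_le {ι : Type*} [Fintype ι] [DecidableEq ι] {s W : ι → ℝ}
    {a γ : ℝ} (hW : ∀ i, 0 ≤ W i) (hW1 : ∑ i, W i = 1) (ha : ∑ i, s i ^ 2 * W i = a)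
    (hγ : 0 < γ) (hgap : ∀ i j, s i ≠ s j → γ ≤ |s i - s j|) (hsmall : a ≤ γ ^ 2 / 8) :
    ∃ (S : Finset ι) (s₀ : ℝ), (∀ i ∈ S, s i = s₀) ∧ (∀ i ∉ S, γ ^ 2 / 4 ≤ s i ^ 2) ∧
      1 - 4 / γ ^ 2 * a ≤ ∑ i ∈ S, W i := by
  obtain ⟨j, -⟩ := nonempty_of_sum_ne_zero (hW1 ▸ one_ne_zero : ∑ i, W i ≠ 0)
  obtain ⟨i₀, -, hi₀⟩ := exists_min_image univ (fun i => s i ^ 2) ⟨j, mem_univ j⟩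
  have hs₀ : s i₀ ^ 2 ≤ a := calc
    s i₀ ^ 2 = ∑ i, s i₀ ^ 2 * W i := by rw [← mul_sum, hW1, mul_one]
    _ ≤ a := ha ▸ sum_le_sum fun i _ => mul_le_mul_of_nonneg_right (hi₀ i (mem_univ i)) (hW i)
  set S := univ.filter fun i => s i = s i₀
  have hfar : ∀ i ∉ S, γ ^ 2 / 4 ≤ s i ^ 2 := fun i hi =>
    sq_le_sq_of_le_abs_sub (hs₀.trans hsmall) hγ.le (hgap i i₀ (by simpa [S] using hi))
  refine ⟨S, s i₀, fun i hi => (mem_filter.1 hi).2, hfar, ?_⟩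
  have hout : γ ^ 2 / 4 * ∑ i ∈ Sᶜ, W i ≤ a := by
    rw [← ha, mul_sum, ← sum_add_sum_compl S (fun i => s i ^ 2 * W i)]
    exact le_add_of_nonneg_of_le (sum_nonneg fun i _ => mul_nonneg (sq_nonneg _) (hW i))
      (sum_le_sum fun i hi => mul_le_mul_of_nonneg_right (hfar i (mem_compl.1 hi)) (hW i))
  have : ∑ i ∈ Sᶜ, W i ≤ 4 / γ ^ 2 * a := by
    rw [show 4 / γ ^ 2 * a = a / (γ ^ 2 / 4) by ring, le_div_iff₀' (by positivity)]
    exact hout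
  rw [← hW1, ← sum_add_sum_compl S]
  linarith

variable {𝕜 E : Type*} [RCLike 𝕜] [NormedAddCommGroup E] [InnerProductSpace 𝕜 E]

theorem Submodule.inner_eq_zero_of_forall_norm_le_norm_sub (K : Submodule 𝕜 E)
    [K.HasOrthogonalProjection] {x : E} (h : ∀ w ∈ K, ‖x‖ ≤ ‖x - w‖) :
    ∀ w ∈ K, ⟪x, w⟫_𝕜 = 0 := by
  have hbdd : BddBelow (Set.range fun w : K => ‖x - w‖) :=
    ⟨0, Set.forall_mem_range.2 fun _ => norm_nonneg _⟩
  have hinf : ‖x - 0‖ = ⨅ w : K, ‖x - w‖ :=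
    le_antisymm (le_ciInf fun w => by simpa using h w w.2) (by simpa using ciInf_le hbdd 0)
  simpa using (K.norm_eq_iInf_iff_inner_eq_zero K.zero_mem).1 hinf

theorem norm_le_norm_add_smul_of_inner_eq_zero {x y : E} (h : ⟪x, y⟫_𝕜 = 0) (c : 𝕜) :
    ‖y‖ ≤ ‖y + c • x‖ := by
  have hyx : ⟪y, c • x⟫_𝕜 = 0 := by rw [inner_smul_right, ← inner_conj_symm, h]; simp
  have := norm_add_sq_eq_norm_sq_add_norm_sq_of_inner_eq_zero y (c • x) hyx
  nlinarith [norm_nonneg y, norm_nonneg (y + c • x), mul_self_nonneg ‖c • x‖]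

theorem norm_sub_rayleigh_smul_le {T : E →ₗ[𝕜] E} {q : E} (hq : ‖q‖ = 1) {ρ : ℝ}
    (hρ : (ρ : 𝕜) = ⟪q, T q⟫_𝕜) (c : 𝕜) :
    ‖(T - (ρ : 𝕜) • 1) q‖ ≤ ‖(T - c • 1) q‖ := by
  have h : ⟪q, T q - (ρ : 𝕜) • q⟫_𝕜 = 0 := by
    rw [inner_sub_right, inner_smul_right, inner_self_eq_norm_sq_to_K, hq, hρ]; simp
  simpa [sub_add_sub_cancel, sub_smul] using norm_le_norm_add_smul_of_inner_eq_zero h ((ρ : 𝕜) - c)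

theorem norm_sub_rayleigh_smul_sq_mul_le {T : E →ₗ[𝕜] E} {p q : E} (hp : p ≠ 0)
    (hq : q = ((‖p‖⁻¹ : ℝ) : 𝕜) • p) {ρ : ℝ} (hρ : (ρ : 𝕜) = ⟪q, T q⟫_𝕜) (c : 𝕜) :
    ‖(T - (ρ : 𝕜) • 1) q‖ ^ 2 * ‖p‖ ^ 2 ≤ ‖(T - c • 1) p‖ ^ 2 := by
  have hp' : ‖p‖ ≠ 0 := norm_ne_zero_iff.2 hp
  have hq1 : ‖q‖ = 1 := by
    rw [hq, norm_smul, RCLike.norm_ofReal, abs_inv, abs_norm, inv_mul_cancel₀ hp']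
  have hscale : ‖(T - c • 1) q‖ * ‖p‖ = ‖(T - c • 1) p‖ := by
    rw [hq, map_smul, norm_smul, RCLike.norm_ofReal, abs_inv, abs_norm, mul_comm,
      ← mul_assoc, mul_inv_cancel₀ hp', one_mul]
  rw [← mul_pow, ← hscale]
  exact pow_le_pow_left₀ (by positivity)
    (mul_le_mul_of_nonneg_right (norm_sub_rayleigh_smul_le hq1 hρ c) (norm_nonneg _)) 2

def IsMinResidualCorrection (M : E →ₗ[𝕜] E) (u v : E) : Prop :=
  ⟪u, v⟫_𝕜 = 0 ∧ ∀ w, ⟪u, w⟫_𝕜 = 0 → ‖M (u + v)‖ ≤ ‖M (u + w)‖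

namespace IsMinResidualCorrection

variable {M : E →ₗ[𝕜] E} {u v : E}

theorem norm_apply_le (h : IsMinResidualCorrection M u v) : ‖M (u + v)‖ ≤ ‖M u‖ := by
  simpa using h.2 0 (inner_zero_right u)

theorem norm_add_sq (h : IsMinResidualCorrection M u v) (hu : ‖u‖ = 1) :
    ‖u + v‖ ^ 2 = 1 + ‖v‖ ^ 2 := by
  rw [@_root_.norm_add_sq 𝕜, h.1, hu]; simp

theorem inner_apply_eq_zero (h : IsMinResidualCorrection M u v) {w : E} (hw : ⟪u, w⟫_𝕜 = 0) :
    ⟪M (u + v), M w⟫_𝕜 = 0 := by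
  refine (𝕜 ∙ M w).inner_eq_zero_of_forall_norm_le_norm_sub (fun z hz => ?_) _
    (Submodule.mem_span_singleton_self _)
  obtain ⟨c, rfl⟩ := Submodule.mem_span_singleton.mp hz
  have hw' : ⟪u, v - c • w⟫_𝕜 = 0 := by rw [inner_sub_right, inner_smul_right, h.1, hw]; simp
  simpa [map_sub, add_sub_assoc] using h.2 _ hw'

theorem apply_apply_eq (h : IsMinResidualCorrection M u v) (hM : M.IsSymmetric) (hu : ‖u‖ = 1) :
    M (M (u + v)) = ((‖M (u + v)‖ ^ 2 : ℝ) : 𝕜) • u := by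
  have hperp : M (M (u + v)) ∈ (𝕜 ∙ u)ᗮᗮ := by
    refine (Submodule.mem_orthogonal _ _).2 fun w hw => ?_
    rw [Submodule.mem_orthogonal_singleton_iff_inner_right] at hw
    rw [← hM, ← inner_conj_symm, h.inner_apply_eq_zero hw, map_zero]
  rw [Submodule.orthogonal_orthogonal, Submodule.mem_span_singleton] at hperp
  obtain ⟨c, hc⟩ := hperp
  have hc' : ⟪u + v, M (M (u + v))⟫_𝕜 = c := by
    rw [← hc, inner_smul_right, inner_add_left, inner_self_eq_norm_sq_to_K, hu,
      ← inner_conj_symm, h.1]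
    simp
  rw [← hc, ← hc', ← hM, inner_self_eq_norm_sq_to_K]
  simp

end IsMinResidualCorrection

theorem sum_mul_norm_sq_eq_one_of_eq_mul {ι : Type*} [Fintype ι] {b : ι → ℝ} {x y : ι → 𝕜}
    (hy : ∀ i, y i = (b i : 𝕜) * x i) (hxy : ∑ i, conj (x i) * y i = 1) :
    ∑ i, b i * ‖x i‖ ^ 2 = 1 := by
  have : ∑ i, ((b i * ‖x i‖ ^ 2 : ℝ) : 𝕜) = 1 := by
    rw [← hxy]
    refine sum_congr rfl fun i _ => ?_
    rw [hy i, mul_left_comm, RCLike.conj_mul]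
    push_cast; ring
  exact_mod_cast this

theorem sum_norm_sq_le_of_sq_mul_eq {ι : Type*} [Fintype ι] {s : ι → ℝ} {x y : ι → 𝕜}
    {κ a γ : ℝ} (hx : ∑ i, ‖x i‖ ^ 2 = 1) (ha : ∑ i, s i ^ 2 * ‖x i‖ ^ 2 = a)
    (hxy : ∑ i, conj (x i) * y i = 1) (hsy : ∀ i, ((s i ^ 2 : ℝ) : 𝕜) * y i = κ * x i)
    (hκ : 0 < κ) (hκa : κ ≤ a) (hγ : 0 < γ) (hgap : ∀ i j, s i ≠ s j → γ ≤ |s i - s j|)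
    (hsmall : a ≤ γ ^ 2 / 8) : ∑ i, ‖y i‖ ^ 2 ≤ 1 + 12 / γ ^ 2 * a := by
  classical
  obtain ⟨S, s₀, hS, hfar, hmass⟩ :=
    exists_cluster_of_sum_sq_mul_le (fun i => sq_nonneg ‖x i‖) hx ha hγ hgap hsmall
  set c := 4 / γ ^ 2 * a
  have hc : c ≤ 1 / 2 := calc
    c ≤ 4 / γ ^ 2 * (γ ^ 2 / 8) := mul_le_mul_of_nonneg_left hsmall (by positivity)
    _ = 1 / 2 := by field_simp; norm_num
  -- if `s = 0` on the cluster, `s² y = κ x` forces `x = 0` there, yet `S` carries most weight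
  have hs : ∀ i, s i ≠ 0 := by
    intro i
    by_cases hi : i ∈ S
    · rw [hS i hi]
      intro h₀
      have hzero : ∑ i ∈ S, ‖x i‖ ^ 2 = 0 := sum_eq_zero fun j hj => by
        have := hsy j
        rw [hS j hj, h₀] at this
        simp [hκ.ne'] at this
        simp [this]
      linarith
    · exact pow_ne_zero_iff two_ne_zero |>.1 (lt_of_lt_of_le (by positivity) (hfar i hi)).ne'
  set b := fun i => κ / s i ^ 2
  have hb : ∀ i, 0 ≤ b i := fun i => div_nonneg hκ.le (sq_nonneg _)
  have hy : ∀ i, y i = (b i : 𝕜) * x i := fun i => by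
    have hs2 : ((s i ^ 2 : ℝ) : 𝕜) ≠ 0 := by exact_mod_cast pow_ne_zero 2 (hs i)
    apply mul_left_cancel₀ hs2
    rw [hsy i, ← mul_assoc, ← RCLike.ofReal_mul, mul_div_cancel₀ _ (pow_ne_zero 2 (hs i))]
  have hnorm : ∑ i, ‖y i‖ ^ 2 = ∑ i, b i ^ 2 * ‖x i‖ ^ 2 := sum_congr rfl fun i _ => by
    rw [hy i, norm_mul, RCLike.norm_ofReal, abs_of_nonneg (hb i), mul_pow]
  have hbc : ∀ i ∉ S, b i ≤ c := fun i hi => calc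
    b i ≤ a / (γ ^ 2 / 4) := div_le_div₀ (by linarith) hκa (by positivity) (hfar i hi)
    _ = c := by simp only [c]; ring
  calc ∑ i, ‖y i‖ ^ 2 ≤ 1 + 3 * c := hnorm ▸ sum_sq_mul_le_one_add S (b₀ := κ / s₀ ^ 2)
        (fun i => by positivity) hb (sum_mul_norm_sq_eq_one_of_eq_mul hy hxy)
        (fun i hi => by simp only [b, hS i hi]) hmass
        (mul_nonneg (by positivity) (hκ.le.trans hκa)) hc hbc
    _ = 1 + 12 / γ ^ 2 * a := by ring

theorem LinearMap.IsSymmetric.norm_sq_le_of_apply_apply_eq [FiniteDimensional 𝕜 E]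
    {T : E →ₗ[𝕜] E} (hT : T.IsSymmetric) {γ : ℝ} (hγ : 0 < γ)
    (hgap : ∀ i j, hT.eigenvalues rfl i ≠ hT.eigenvalues rfl j →
      γ ≤ |hT.eigenvalues rfl i - hT.eigenvalues rfl j|)
    {ρ κ : ℝ} {u p : E} (hu : ‖u‖ = 1) (hup : ⟪u, p⟫_𝕜 = 1)
    (hMp : (T - (ρ : 𝕜) • 1) ((T - (ρ : 𝕜) • 1) p) = (κ : 𝕜) • u) (hκ : 0 < κ)
    (hκa : κ ≤ ‖(T - (ρ : 𝕜) • 1) u‖ ^ 2) (hsmall : ‖(T - (ρ : 𝕜) • 1) u‖ ^ 2 ≤ γ ^ 2 / 8) :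
    ‖p‖ ^ 2 ≤ 1 + 12 / γ ^ 2 * ‖(T - (ρ : 𝕜) • 1) u‖ ^ 2 := by
  set e := hT.eigenvectorBasis rfl
  set s := fun i => hT.eigenvalues rfl i - ρ
  have hcoord : ∀ z i, e.repr ((T - (ρ : 𝕜) • 1) z) i = (s i : 𝕜) * e.repr z i := fun z i => by
    simp [e, s, hT.eigenvectorBasis_apply_self_apply, sub_mul, Algebra.smul_def]
  have hnorm : ∀ z, ‖z‖ ^ 2 = ∑ i, ‖e.repr z i‖ ^ 2 := fun z => by
    rw [← EuclideanSpace.norm_sq_eq, LinearIsometryEquiv.norm_map]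
  rw [hnorm p]
  refine sum_norm_sq_le_of_sq_mul_eq (s := s) (x := e.repr u) ?_ ?_ ?_ (fun i => ?_) hκ hκa hγ
    (fun i j hij => by simpa [s] using hgap i j (by simpa [s] using hij)) hsmall
  · rw [← hnorm, hu, one_pow]
  · simp_rw [hnorm ((T - (ρ : 𝕜) • 1) u), hcoord, norm_mul, mul_pow, RCLike.norm_ofReal, sq_abs]
  · rw [← hup, ← e.repr.inner_map_map, PiLp.inner_apply]
    simp_rw [RCLike.inner_apply']
  · have := congrArg (fun z => e.repr z i) hMp
    simp only [hcoord, map_smul, PiLp.smul_apply, smul_eq_mul] at this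
    rw [← this]
    push_cast
    ring

theorem LinearMap.IsSymmetric.tendsto_norm_residual_sq_mul_norm_sq [FiniteDimensional 𝕜 E]
    {T : E →ₗ[𝕜] E} (hT : T.IsSymmetric) (u v : ℕ → E) (ρ : ℕ → ℝ) (hu : ∀ k, ‖u k‖ = 1)
    (hρ : ∀ k, (ρ k : 𝕜) = ⟪u k, T (u k)⟫_𝕜)
    (hv : ∀ k, IsMinResidualCorrection (T - (ρ k : 𝕜) • 1) (u k) (v k))
    (hnext : ∀ k, u (k + 1) = ((‖u k + v k‖⁻¹ : ℝ) : 𝕜) • (u k + v k)) :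
    Tendsto (fun k => ‖(T - (ρ k : 𝕜) • 1) (u k)‖ ^ 2 * ‖v k‖ ^ 2) atTop (𝓝 0) := by
  obtain ⟨γ, hγ, hgap⟩ := exists_pos_le_abs_sub_of_ne (hT.eigenvalues rfl)
  have hp : ∀ k, u k + v k ≠ 0 := fun k h => by
    have := (hv k).norm_add_sq (hu k)
    rw [h, norm_zero] at this
    nlinarith [sq_nonneg ‖v k‖]
  have hstep : ∀ k, ‖(T - (ρ (k + 1) : 𝕜) • 1) (u (k + 1))‖ ^ 2 * (1 + ‖v k‖ ^ 2) ≤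
      ‖(T - (ρ k : 𝕜) • 1) (u k + v k)‖ ^ 2 := fun k => by
    rw [← (hv k).norm_add_sq (hu k)]
    exact norm_sub_rayleigh_smul_sq_mul_le (hp k) (hnext k) (hρ (k + 1)) _
  have hres : ∀ k, ‖(T - (ρ k : 𝕜) • 1) (u k + v k)‖ ^ 2 ≤ ‖(T - (ρ k : 𝕜) • 1) (u k)‖ ^ 2 :=
    fun k => pow_le_pow_left₀ (norm_nonneg _) (hv k).norm_apply_le 2
  refine tendsto_mul_zero_of_succ_mul_one_add_le (fun _ => sq_nonneg _) (fun _ => sq_nonneg _)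
    (fun k => (hstep k).trans (hres k)) (by positivity : 0 < γ ^ 2 / 8) (C := 12 / γ ^ 2)
    fun k hpos hsmall => ?_
  have hκ : 0 < ‖(T - (ρ k : 𝕜) • 1) (u k + v k)‖ ^ 2 :=
    lt_of_lt_of_le (by positivity) (hstep k)
  have hM : (T - (ρ k : 𝕜) • 1).IsSymmetric :=
    hT.sub (LinearMap.IsSymmetric.one.smul (RCLike.conj_ofReal _))
  have hup : ⟪u k, u k + v k⟫_𝕜 = 1 := by
    rw [inner_add_right, (hv k).1, inner_self_eq_norm_sq_to_K, hu k]; simp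
  have := hT.norm_sq_le_of_apply_apply_eq hγ hgap (hu k) hup ((hv k).apply_apply_eq hM (hu k))
    hκ (hres k) hsmall
  rw [(hv k).norm_add_sq (hu k)] at this
  linarith

end

theorem mApp_sub_smul_one {n : ℕ} (A : Matrix (Fin n) (Fin n) ℂ) (c : ℂ)
    (x : EuclideanSpace ℂ (Fin n)) :
    mApp (A - c • 1) x = (Matrix.toEuclideanLin A - c • 1) x := by
  simp [mApp]

theorem stmt11_general {n : ℕ} (A : Matrix (Fin n) (Fin n) ℂ) (hA : A.IsHermitian)
    (u v : ℕ → EuclideanSpace ℂ (Fin n)) (ρ : ℕ → ℝ)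
    (hu : ∀ k, ‖u k‖ = 1)
    (hρ : ∀ k, ((ρ k : ℂ)) = ⟪u k, mApp A (u k)⟫)
    (horth : ∀ k, ⟪u k, v k⟫ = (0 : ℂ))
    (hmin : ∀ k, ∀ w : EuclideanSpace ℂ (Fin n), ⟪u k, w⟫ = (0 : ℂ) →
      ‖mApp (A - (ρ k : ℂ) • 1) (u k + v k)‖ ≤ ‖mApp (A - (ρ k : ℂ) • 1) (u k + w)‖)
    (hnext : ∀ k, u (k + 1) = ‖u k + v k‖⁻¹ • (u k + v k)) :
    Filter.Tendsto (fun k => ‖mApp (A - (ρ k : ℂ) • 1) (u k)‖ ^ 2 * ‖v k‖ ^ 2)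
      Filter.atTop (nhds 0) := by
  simp only [mApp_sub_smul_one] at hmin ⊢
  exact (Matrix.isSymmetric_toEuclideanLin_iff.mpr hA).tendsto_norm_residual_sq_mul_norm_sq u v ρ
    hu hρ (fun k => ⟨horth k, hmin k⟩) fun k => (hnext k).trans (RCLike.real_smul_eq_coe_smul _ _)

theorem stmt11 {n : ℕ} (A : Matrix (Fin n) (Fin n) ℂ) (hA : A.IsHermitian)
    (u v : ℕ → EuclideanSpace ℂ (Fin n)) (ρ : ℕ → ℝ)
    (hu : ∀ k, ‖u k‖ = 1)
    (hρ : ∀ k, ((ρ k : ℂ)) = ⟪u k, mApp A (u k)⟫)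
    (horth : ∀ k, ⟪u k, v k⟫ = (0 : ℂ))
    (hmin : ∀ k, ∀ w : EuclideanSpace ℂ (Fin n), ⟪u k, w⟫ = (0 : ℂ) →
      ‖mApp (A - (ρ k : ℂ) • 1) (u k + v k)‖ ≤ ‖mApp (A - (ρ k : ℂ) • 1) (u k + w)‖)
    (hnext : ∀ k, u (k + 1) = ‖u k + v k‖⁻¹ • (u k + v k))
    (hmin2 : ∀ k, v k ≠ 0 → ∃ τ : ℂ,
      ∀ z ∈ Submodule.span ℂ ({u k, v k} : Set (EuclideanSpace ℂ (Fin n))), z ≠ 0 →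
        ‖mApp (A - (ρ k : ℂ) • 1) (u k + τ • v k)‖ ^ 2 / ‖u k + τ • v k‖ ^ 2 ≤
          ‖mApp (A - (ρ k : ℂ) • 1) z‖ ^ 2 / ‖z‖ ^ 2) :
    Filter.Tendsto (fun k => ‖mApp (A - (ρ k : ℂ) • 1) (u k)‖ ^ 2 * ‖v k‖ ^ 2)
      Filter.atTop (nhds 0) :=
  stmt11_general A hA u v ρ hu hρ horth hmin hnext
end
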